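/- In the monoid presented by ⟨a, b, c, r, s, t ∣ sba = tca, cab = bb, tbb = rcb, sa = rc⟩, the elements represented by s·b·a·b and s·a·b are equal, but the elements represented by b·a·b and a·b are distinct; hence the monoid is not left cancellative. -/

import Mathlib

namespace Stmt10
def a : FreeMonoid (Fin 6) := FreeMonoid.of 0
def b : FreeMonoid (Fin 6) := FreeMonoid.of 1
def c : FreeMonoid (Fin 6) := FreeMonoid.of 2
def r : FreeMonoid (Fin 6) := FreeMonoid.of 3
def s : FreeMonoid (Fin 6) := FreeMonoid.of 4
def t : FreeMonoid (Fin 6) := FreeMonoid.of 5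
def rel : FreeMonoid (Fin 6) → FreeMonoid (Fin 6) → Prop :=
  fun x y => (x = s * b * a ∧ y = t * c * a) ∨ (x = c * a * b ∧ y = b * b) ∨
    (x = t * b * b ∧ y = r * c * b) ∨ (x = s * a ∧ y = r * c)

/-- interpretation of generators as transformations of `Fin 3` -/
def F : Fin 6 → Function.End (Fin 3) :=
  ![![0, 0, 0], ![1, 1, 0], ![1, 0, 0], ![0, 0, 0], ![0, 0, 0], ![0, 0, 0]]

def φ : FreeMonoid (Fin 6) →* Function.End (Fin 3) := FreeMonoid.lift F

lemma rel_ker : ∀ x y, rel x y → Con.ker φ x y := by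
  intro x y h
  rcases h with ⟨hx, hy⟩ | ⟨hx, hy⟩ | ⟨hx, hy⟩ | ⟨hx, hy⟩ <;> subst hx <;> subst hy <;>
    · show φ _ = φ _
      simp only [φ, a, b, c, r, s, t, map_mul, FreeMonoid.lift_eval_of]
      funext i
      fin_cases i <;> rfl

lemma key : ∀ x y, conGen rel x y → φ x = φ y := fun _ _ h =>
  Con.conGen_le.2 rel_ker h

lemma part1 : conGen rel (s * b * a * b) (s * a * b) := by
  have h1 : conGen rel (s * b * a * b) (t * c * a * b) :=
    ConGen.Rel.mul (ConGen.Rel.of _ _ (Or.inl ⟨rfl, rfl⟩)) (ConGen.Rel.refl b)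
  have h2 : conGen rel (t * (c * a * b)) (t * (b * b)) :=
    ConGen.Rel.mul (ConGen.Rel.refl t) (ConGen.Rel.of _ _ (Or.inr (Or.inl ⟨rfl, rfl⟩)))
  have h3 : conGen rel (t * b * b) (r * c * b) :=
    ConGen.Rel.of _ _ (Or.inr (Or.inr (Or.inl ⟨rfl, rfl⟩)))
  have h4 : conGen rel (s * a * b) (r * c * b) :=
    ConGen.Rel.mul (ConGen.Rel.of _ _ (Or.inr (Or.inr (Or.inr ⟨rfl, rfl⟩)))) (ConGen.Rel.refl b)
  exact ((h1.trans h2).trans h3).trans h4.symm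

lemma part2 : ¬ conGen rel (b * a * b) (a * b) := by
  intro h
  have := key _ _ h
  simp only [φ, a, b, map_mul, FreeMonoid.lift_eval_of] at this
  have := congrFun this 0
  simp [F, Function.End.mul_def, Function.comp] at this
  revert this; decide

theorem stmt10 :
    conGen rel (s * b * a * b) (s * a * b) ∧ ¬ conGen rel (b * a * b) (a * b) ∧
    ¬ (∀ x y z : (conGen rel).Quotient, x * y = x * z → y = z) := by
  refine ⟨part1, part2, fun h => part2 ?_⟩
  have := h (s : (conGen rel).Quotient) (b * a * b) (a * b) ?_
  · exact (Con.eq _).mp this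
  · show ((s * (b * a * b) : FreeMonoid (Fin 6)) : (conGen rel).Quotient) = ↑(s * (a * b))
    exact (Con.eq _).mpr part1

end Stmt10
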